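/- Let n ≥ 2 be a natural number, let f : [0,∞) → ℝ be any function, suppose the set {t ∈ ℕ/n : f(t) ≥ 1} is nonempty with least element τⁿ, and assume τⁿ ≥ 6. Then for t ∈ ℕ/n: f,t ⊭ₙ φ₁ for t = 0, 1/n, …, τⁿ−5−1/n; f,t ⊨ₙ φ₁ for t = τⁿ−5 and t = τⁿ−5+1/n; and f,t ⊭ₙ φ₁ for t = τⁿ−5+2/n, …, τⁿ−2−2/n. -/

import Mathlib

/-!
Write `τ` for the first grid time at which `p` holds. At a grid time `u`, the inner formula
`◇_{(1,4)}p ∧ ¬◇_{(1,3)}p` holds as soon as `u + 3 ≤ τ < u + 4`, fails when `u + 4 ≤ τ`, and fails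
when `u + 1 < τ < u + 3`. Since consecutive grid points are `1/n` apart, the grid points of `(1,2)`
run from `1 + 1/n` to `2 - 1/n`, so `□_{(1,2)}` of the inner formula holds at `t` whenever
`τ - 5 - 1/n < t ≤ τ - 5 + 1/n`. Further from `τ - 5`, a suitable grid offset in `(1,2)` puts one
of the two failure conditions in force.
-/

open scoped NNReal

/-- The grid `ℕ/n = {k/n : k ∈ ℕ}` inside `[0,∞)`. -/
def grid (n : ℕ) : Set ℝ≥0 := {t | ∃ k : ℕ, t = (k : ℝ≥0) / (n : ℝ≥0)}

/-- Discrete `◇_I φ` at time `t`: there is `s ∈ I ∩ ℕ/n` with `φ` at `t+s`. -/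
def DiaD (n : ℕ) (I : Set ℝ≥0) (φ : ℝ≥0 → Prop) (t : ℝ≥0) : Prop := ∃ s ∈ I ∩ grid n, φ (t + s)

/-- Discrete `□_I φ` at time `t`: for all `s ∈ I ∩ ℕ/n`, `φ` at `t+s`. -/
def BoxD (n : ℕ) (I : Set ℝ≥0) (φ : ℝ≥0 → Prop) (t : ℝ≥0) : Prop := ∀ s ∈ I ∩ grid n, φ (t + s)

/-- The atomic proposition `p`: `f(t) ≥ 1`. -/
def SatP (f : ℝ≥0 → ℝ) (t : ℝ≥0) : Prop := 1 ≤ f t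

/-- Discrete semantics of `φ₁ := □_{(1,2)}(◇_{(1,4)}p ∧ ¬◇_{(1,3)}p)`. -/
def Phi1D (f : ℝ≥0 → ℝ) (n : ℕ) : ℝ≥0 → Prop :=
  BoxD n (Set.Ioo 1 2) fun u =>
    DiaD n (Set.Ioo 1 4) (SatP f) u ∧ ¬ DiaD n (Set.Ioo 1 3) (SatP f) u

section Grid

variable {n : ℕ} {s t : ℝ≥0}

lemma add_mem_grid (hs : s ∈ grid n) (ht : t ∈ grid n) : s + t ∈ grid n := by
  obtain ⟨a, rfl⟩ := hs
  obtain ⟨b, rfl⟩ := ht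
  exact ⟨a + b, by rw [Nat.cast_add, add_div]⟩

lemma tsub_mem_grid (hs : s ∈ grid n) (ht : t ∈ grid n) : s - t ∈ grid n := by
  obtain ⟨a, rfl⟩ := hs
  obtain ⟨b, rfl⟩ := ht
  exact ⟨a - b, by rw [Nat.cast_tsub, tsub_div]⟩

lemma exists_mem_grid_add_eq (hs : s ∈ grid n) (ht : t ∈ grid n) (hst : s ≤ t) :
    ∃ r ∈ grid n, s + r = t :=
  ⟨t - s, tsub_mem_grid ht hs, add_tsub_cancel_of_le hst⟩

lemma natCast_mem_grid (hn : n ≠ 0) (k : ℕ) : (k : ℝ≥0) ∈ grid n :=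
  ⟨k * n, by rw [Nat.cast_mul, mul_div_cancel_right₀ _ (Nat.cast_ne_zero.mpr hn)]⟩

lemma one_div_mem_grid : 1 / (n : ℝ≥0) ∈ grid n := ⟨1, by rw [Nat.cast_one]⟩

lemma add_one_div_le_of_lt (hs : s ∈ grid n) (ht : t ∈ grid n) (hst : s < t) :
    s + 1 / n ≤ t := by
  obtain ⟨a, rfl⟩ := hs
  obtain ⟨b, rfl⟩ := ht
  rcases n.eq_zero_or_pos with rfl | hn
  · simp at hst
  have hn' : (0 : ℝ≥0) < n := Nat.cast_pos.mpr hn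
  have hab : a < b := by exact_mod_cast (div_lt_div_iff_of_pos_right hn').mp hst
  rw [← add_div]
  exact div_le_div_of_nonneg_right (by exact_mod_cast hab) hn'.le

lemma one_div_mem_Ioo_of_two_le (hn : 2 ≤ n) : 1 / (n : ℝ≥0) ∈ Set.Ioo 0 1 := by
  have hn' : (1 : ℝ≥0) < n := by exact_mod_cast hn
  exact ⟨one_div_pos.mpr (one_pos.trans hn'), (div_lt_one (one_pos.trans hn')).mpr hn'⟩

end Grid

section FirstHit

variable {n : ℕ} {f : ℝ≥0 → ℝ} {τ t u a b : ℝ≥0}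

lemma diaD_of_isLeast (hτ : IsLeast {t | t ∈ grid n ∧ 1 ≤ f t} τ) (hu : u ∈ grid n)
    (ha : u + a < τ) (hb : τ < u + b) : DiaD n (Set.Ioo a b) (SatP f) u := by
  obtain ⟨r, hr, rfl⟩ := exists_mem_grid_add_eq hu hτ.1.1 (le_self_add.trans ha.le)
  exact ⟨r, ⟨⟨lt_of_add_lt_add_left ha, lt_of_add_lt_add_left hb⟩, hr⟩, hτ.1.2⟩

lemma not_diaD_of_isLeast (hτ : IsLeast {t | t ∈ grid n ∧ 1 ≤ f t} τ) (hu : u ∈ grid n)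
    (hb : u + b ≤ τ) : ¬ DiaD n (Set.Ioo a b) (SatP f) u := by
  rintro ⟨s, ⟨⟨-, hs⟩, hs_grid⟩, hs_sat⟩
  exact (hτ.2 ⟨add_mem_grid hu hs_grid, hs_sat⟩).not_gt (((add_lt_add_iff_left u).mpr hs).trans_le hb)

lemma phi1D_of_isLeast (hτ : IsLeast {t | t ∈ grid n ∧ 1 ≤ f t} τ) (hn : n ≠ 0)
    (ht : t ∈ grid n) (h₁ : τ < t + 5 + 1 / n) (h₂ : t + 5 ≤ τ + 1 / n) : Phi1D f n t := by
  rintro s ⟨⟨hs₁, hs₂⟩, hs⟩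
  have h₁s := add_one_div_le_of_lt (by exact_mod_cast natCast_mem_grid hn 1) hs hs₁
  have hs₂ := add_one_div_le_of_lt hs (by exact_mod_cast natCast_mem_grid hn 2) hs₂
  have hu := add_mem_grid ht hs
  exact ⟨diaD_of_isLeast hτ hu (by linarith) (by linarith),
    not_diaD_of_isLeast hτ hu (by linarith)⟩

lemma not_phi1D_of_add_le (hτ : IsLeast {t | t ∈ grid n ∧ 1 ≤ f t} τ) (hn : 2 ≤ n)
    (ht : t ∈ grid n) (h : t + 5 + 1 / n ≤ τ) : ¬ Phi1D f n t := by
  intro hφ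
  obtain ⟨hδ₀, hδ₁⟩ := one_div_mem_Ioo_of_two_le hn
  have hs : 1 + 1 / (n : ℝ≥0) ∈ Set.Ioo 1 2 ∩ grid n :=
    ⟨⟨by simpa using hδ₀, by linarith⟩,
      add_mem_grid (by exact_mod_cast natCast_mem_grid (by omega) 1) one_div_mem_grid⟩
  exact not_diaD_of_isLeast hτ (add_mem_grid ht hs.2) (by linarith) (hφ _ hs).1

lemma not_phi1D_of_le_of_add_le (hτ : IsLeast {t | t ∈ grid n ∧ 1 ≤ f t} τ) (hn : 2 ≤ n)
    (ht : t ∈ grid n) (h₁ : τ + 2 * (1 / n) ≤ t + 5) (h₂ : t + 2 + 2 * (1 / n) ≤ τ) :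
    ¬ Phi1D f n t := by
  intro hφ
  obtain ⟨hδ₀, hδ₁⟩ := one_div_mem_Ioo_of_two_le hn
  have hn₀ : n ≠ 0 := by omega
  obtain ⟨s, hs, hlo, hhi⟩ : ∃ s ∈ Set.Ioo 1 2 ∩ grid n, t + s + 1 < τ ∧ τ < t + s + 3 := by
    rcases le_or_gt τ (t + 4) with h | h
    · exact ⟨1 + 1 / n, ⟨⟨by simpa using hδ₀, by linarith⟩,
        add_mem_grid (by exact_mod_cast natCast_mem_grid hn₀ 1) one_div_mem_grid⟩,
        by linarith, by linarith⟩
    · obtain ⟨r, hr, rfl⟩ := exists_mem_grid_add_eq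
        (add_mem_grid ht (by exact_mod_cast natCast_mem_grid hn₀ 3)) hτ.1.1 (by linarith)
      exact ⟨r + 1 / n, ⟨⟨by linarith, by linarith⟩, add_mem_grid hr one_div_mem_grid⟩,
        by linarith, by linarith⟩
  exact (hφ s hs).2 (diaD_of_isLeast hτ (add_mem_grid ht hs.2) hlo hhi)

end FirstHit

/-- for `n ≥ 2`, any `f : [0,∞) → ℝ`, if `τⁿ` is the least element of
`{t ∈ ℕ/n : f(t) ≥ 1}` and `τⁿ ≥ 6`, then along the grid: `φ₁` fails at `t = 0,…,τⁿ−5−1/n`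
(i.e. `t + 5 + 1/n ≤ τⁿ`), holds at `t = τⁿ−5` and `t = τⁿ−5+1/n`, and fails at
`t = τⁿ−5+2/n,…,τⁿ−2−2/n` (i.e. `τⁿ−5+2/n ≤ t` and `t + 2 + 2/n ≤ τⁿ`). -/
theorem stmt_7 (n : ℕ) (hn : 2 ≤ n) (f : ℝ≥0 → ℝ) (τn : ℝ≥0)
    (hτ : IsLeast {t | t ∈ grid n ∧ 1 ≤ f t} τn) (h6 : 6 ≤ τn) :
    (∀ t ∈ grid n, t + 5 + 1 / (n : ℝ≥0) ≤ τn → ¬ Phi1D f n t) ∧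
      Phi1D f n (τn - 5) ∧ Phi1D f n (τn - 5 + 1 / (n : ℝ≥0)) ∧
      (∀ t ∈ grid n, τn - 5 + 2 / (n : ℝ≥0) ≤ t → t + 2 + 2 / (n : ℝ≥0) ≤ τn →
        ¬ Phi1D f n t) := by
  have hn₀ : n ≠ 0 := by omega
  have hδ₀ := (one_div_mem_Ioo_of_two_le hn).1
  obtain ⟨r, hr, rfl⟩ := exists_mem_grid_add_eq
    (by exact_mod_cast natCast_mem_grid hn₀ 5) hτ.1.1 (le_trans (by norm_num) h6)
  rw [add_tsub_cancel_left, ← mul_one_div (2 : ℝ≥0)]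
  refine ⟨fun t ht h => not_phi1D_of_add_le hτ hn ht h,
    phi1D_of_isLeast hτ hn₀ hr (by linarith) (by linarith),
    phi1D_of_isLeast hτ hn₀ (add_mem_grid hr one_div_mem_grid) (by linarith) (by linarith),
    fun t ht h₁ h₂ => not_phi1D_of_le_of_add_le hτ hn ht (by linarith) (by linarith)⟩
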